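/- Let F be a finite nonempty type, let P be an F-by-F real matrix with nonnegative entries such that every row of P sums to 1, let α be a real number with 0 < α < 1, let w : F → ℝ satisfy w(i) > 0 for all i and the detailed-balance condition w(i)·P[i,j] = w(j)·P[j,i] for all i, j, and let s : F → ℝ satisfy s(i) > 0 for all i. For an integer t ≥ 0, define R = ∑_{ℓ=0}^{∞} (1−α)·α^ℓ · P^ℓ and its truncation R_t = ∑_{ℓ=0}^{t} (1−α)·α^ℓ · P^ℓ, and set C(e) = ∑_{i ∈ F} (w(i)/s(i))·R[i,e] and C'_t(e) = ∑_{i ∈ F} (w(i)/s(i))·R_t[i,e]. Then for every e ∈ F: 0 ≤ C(e) − C'_t(e) ≤ w(e) · α^{t+1} / (min_{i ∈ F} s(i)). -/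

import Mathlib

/-!
The tail `R - R_t = ∑_{ℓ > t} (1 - α) α^ℓ P^ℓ` is a nonnegative combination of row-stochastic
matrices satisfying detailed balance with respect to `w`. Hence it is entrywise nonnegative, each of
its rows sums to `∑_{ℓ > t} (1 - α) α^ℓ = α^{t+1}`, and it satisfies detailed balance itself. After
replacing `1 / s i` by `1 / min s`, detailed balance turns the weighted column sum
`∑ i, w i (R - R_t) i e` into `w e` times the `e`-th row sum, which is `w e α^{t+1}`.
-/

open Matrix Finset

namespace Matrix

variable {n ι R : Type*}

def DetailedBalance [CommSemiring R] (w : n → R) (M : Matrix n n R) : Prop :=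
  ∀ i j, w i * M i j = w j * M j i

namespace DetailedBalance

section CommSemiring

variable [CommSemiring R] {w : n → R}

theorem iff_semiconjBy [Fintype n] [DecidableEq n] {M : Matrix n n R} :
    DetailedBalance w M ↔ SemiconjBy (diagonal w) M Mᵀ := by
  simp only [DetailedBalance, SemiconjBy, ← Matrix.ext_iff, diagonal_mul, mul_diagonal,
    transpose_apply, mul_comm (M _ _)]

theorem pow [Fintype n] [DecidableEq n] {P : Matrix n n R} (h : DetailedBalance w P) (k : ℕ) :
    DetailedBalance w (P ^ k) := by
  rw [iff_semiconjBy, transpose_pow]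
  exact (iff_semiconjBy.1 h).pow_right k

theorem smul {M : Matrix n n R} (h : DetailedBalance w M) (c : R) :
    DetailedBalance w (c • M) := fun i j => by
  simp only [smul_apply, smul_eq_mul, mul_left_comm (w _), h i j]

theorem of_hasSum [TopologicalSpace R] [IsTopologicalSemiring R] [T2Space R]
    {M : ι → Matrix n n R} {T : Matrix n n R} (hT : HasSum M T)
    (h : ∀ ℓ, DetailedBalance w (M ℓ)) : DetailedBalance w T := fun i j => by
  have hij := (Pi.hasSum.1 (Pi.hasSum.1 hT i) j).mul_left (w i)
  have hji := (Pi.hasSum.1 (Pi.hasSum.1 hT j) i).mul_left (w j)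
  simp only [h _ i j] at hij
  exact hij.unique hji

end CommSemiring

theorem sum_div_mul_le [Fintype n] {w s : n → ℝ} {m : ℝ} {Q : Matrix n n ℝ}
    (hQ : DetailedBalance w Q) (hQ0 : ∀ i j, 0 ≤ Q i j) (hw : ∀ i, 0 ≤ w i) (hm : 0 < m)
    (hs : ∀ i, m ≤ s i) (e : n) :
    ∑ i, w i / s i * Q i e ≤ w e * (∑ j, Q e j) / m :=
  calc ∑ i, w i / s i * Q i e
      ≤ ∑ i, w i / m * Q i e := sum_le_sum fun i _ =>
        mul_le_mul_of_nonneg_right (div_le_div_of_nonneg_left (hw i) hm (hs i)) (hQ0 i e)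
    _ = w e * (∑ j, Q e j) / m := by
        simp only [mul_sum, sum_div, div_mul_eq_mul_div, hQ _ e]

end DetailedBalance

section RowStochastic

variable [Fintype n] [DecidableEq n] {c : ι → ℝ} {M : ι → Matrix n n ℝ}

theorem summable_smul_of_mem_rowStochastic (hc0 : ∀ ℓ, 0 ≤ c ℓ) (hc : Summable c)
    (hM : ∀ ℓ, M ℓ ∈ rowStochastic ℝ n) : Summable fun ℓ => c ℓ • M ℓ :=
  Pi.summable.2 fun _ => Pi.summable.2 fun _ =>
    hc.of_nonneg_of_le (fun ℓ => mul_nonneg (hc0 ℓ) (nonneg_of_mem_rowStochastic (hM ℓ)))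
      fun ℓ => mul_le_of_le_one_right (hc0 ℓ) (le_one_of_mem_rowStochastic (hM ℓ))

theorem nonneg_of_hasSum_smul_of_mem_rowStochastic {T : Matrix n n ℝ} (hc0 : ∀ ℓ, 0 ≤ c ℓ)
    (hM : ∀ ℓ, M ℓ ∈ rowStochastic ℝ n) (hT : HasSum (fun ℓ => c ℓ • M ℓ) T) (i j : n) :
    0 ≤ T i j :=
  (Pi.hasSum.1 (Pi.hasSum.1 hT i) j).nonneg fun ℓ =>
    mul_nonneg (hc0 ℓ) (nonneg_of_mem_rowStochastic (hM ℓ))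

theorem sum_row_of_hasSum_smul_of_mem_rowStochastic {a : ℝ} {T : Matrix n n ℝ}
    (hM : ∀ ℓ, M ℓ ∈ rowStochastic ℝ n) (hc : HasSum c a)
    (hT : HasSum (fun ℓ => c ℓ • M ℓ) T) (i : n) : ∑ j, T i j = a := by
  refine (hasSum_sum fun j _ => Pi.hasSum.1 (Pi.hasSum.1 hT i) j).unique ?_
  simpa only [smul_apply, smul_eq_mul, ← mul_sum, sum_row_of_mem_rowStochastic (hM _),
    mul_one] using hc

end RowStochastic

end Matrix

theorem hasSum_one_sub_mul_pow_add {α : ℝ} (hα : 0 ≤ α) (hα1 : α < 1) (k : ℕ) :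
    HasSum (fun ℓ => (1 - α) * α ^ (ℓ + k)) (α ^ k) := by
  have h := (hasSum_geometric_of_lt_one hα hα1).mul_left (α ^ k * (1 - α))
  rw [mul_inv_cancel_right₀ (sub_ne_zero.2 hα1.ne')] at h
  have hterm : (fun ℓ => α ^ k * (1 - α) * α ^ ℓ) = fun ℓ => (1 - α) * α ^ (ℓ + k) :=
    funext fun ℓ => by ring
  rwa [hterm] at h

/-- Approximation guarantee for EdgeRAKE: truncating the ERWR series at
step `t` incurs an error between `0` and `w e · α^{t+1} / min_i s i`. -/
theorem stmt_13 {F : Type*} [Fintype F] [Nonempty F] [DecidableEq F]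
    (P : Matrix F F ℝ)
    (hP : ∀ i j, 0 ≤ P i j)
    (hrow : ∀ i, ∑ j, P i j = 1)
    (α : ℝ) (hα : 0 < α) (hα1 : α < 1)
    (w : F → ℝ) (hw : ∀ i, 0 < w i)
    (hdb : ∀ i j, w i * P i j = w j * P j i)
    (s : F → ℝ) (hs : ∀ i, 0 < s i)
    (t : ℕ)
    (R : Matrix F F ℝ) (hR : R = ∑' ℓ : ℕ, ((1 - α) * α ^ ℓ) • P ^ ℓ)
    (Rt : Matrix F F ℝ) (hRt : Rt = ∑ ℓ ∈ Finset.range (t + 1), ((1 - α) * α ^ ℓ) • P ^ ℓ)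
    (C C' : F → ℝ)
    (hC : ∀ e, C e = ∑ i, (w i / s i) * R i e)
    (hC' : ∀ e, C' e = ∑ i, (w i / s i) * Rt i e) :
    ∀ e, 0 ≤ C e - C' e ∧
      C e - C' e ≤ w e * α ^ (t + 1) / (Finset.univ.inf' Finset.univ_nonempty s) := by
  have hPow : ∀ ℓ, P ^ ℓ ∈ rowStochastic ℝ F :=
    pow_mem (mem_rowStochastic_iff_sum.2 ⟨hP, hrow⟩)
  have hcoef : ∀ ℓ, 0 ≤ (1 - α) * α ^ ℓ := fun ℓ =>
    mul_nonneg (sub_nonneg.2 hα1.le) (pow_nonneg hα.le ℓ)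
  have hRsum : HasSum (fun ℓ => ((1 - α) * α ^ ℓ) • P ^ ℓ) R := hR ▸
    (summable_smul_of_mem_rowStochastic hcoef
      ((summable_geometric_of_lt_one hα.le hα1).mul_left _) hPow).hasSum
  have htail : HasSum (fun ℓ => ((1 - α) * α ^ (ℓ + (t + 1))) • P ^ (ℓ + (t + 1))) (R - Rt) :=
    hRt ▸ (hasSum_nat_add_iff' (t + 1)).2 hRsum
  have htail0 :=
    nonneg_of_hasSum_smul_of_mem_rowStochastic (fun _ => hcoef _) (fun _ => hPow _) htail
  have hmin : 0 < univ.inf' univ_nonempty s := (lt_inf'_iff _).2 fun i _ => hs i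
  intro e
  have hdiff : C e - C' e = ∑ i, w i / s i * (R - Rt) i e := by
    simp only [hC, hC', Matrix.sub_apply, mul_sub, sum_sub_distrib]
  rw [hdiff]
  refine ⟨sum_nonneg fun i _ => mul_nonneg (div_nonneg (hw i).le (hs i).le) (htail0 i e), ?_⟩
  calc ∑ i, w i / s i * (R - Rt) i e
      ≤ w e * (∑ j, (R - Rt) e j) / univ.inf' univ_nonempty s :=
        (DetailedBalance.of_hasSum htail fun _ => (DetailedBalance.pow hdb _).smul _).sum_div_mul_le
          htail0 (fun i => (hw i).le) hmin (fun i => inf'_le _ (mem_univ i)) e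
    _ = w e * α ^ (t + 1) / univ.inf' univ_nonempty s := by
        rw [sum_row_of_hasSum_smul_of_mem_rowStochastic (fun _ => hPow _)
          (hasSum_one_sub_mul_pow_add hα.le hα1 (t + 1)) htail e]
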